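/- Trace minimization over the Weyl chamber (key step of Theorem thm:iSWAP1): for all real k_x, k_y, k_z, one has 3 + 6(cos(4k_x)+cos(4k_y)+cos(4k_z)) + 5(cos(4k_x)cos(4k_y) + cos(4k_y)cos(4k_z) + cos(4k_z)cos(4k_x)) ≥ −8, with equality attained at (k_x,k_y,k_z) = (π/4, π/4, 0). Equivalently, the trace 4a−2c = 2 + (1/18)(3 + 6·Σcos(4k) + 5·Σ pairwise products) of the gadget second-moment matrix M(a,c) is minimized, over all KAK coefficients, at the iSWAP coefficients, where it equals 14/9. -/
import Mathlib


lemma cube_min {x y z : ℝ} (hx1 : -1 ≤ x) (hx2 : x ≤ 1) (hy1 : -1 ≤ y) (hy2 : y ≤ 1)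
    (hz1 : -1 ≤ z) (hz2 : z ≤ 1) :
    -8 ≤ 3 + 6 * (x + y + z) + 5 * (x*y + y*z + z*x) := by
  nlinarith [mul_nonneg (by linarith : (0:ℝ) ≤ 1+x) (by linarith : (0:ℝ) ≤ 1+y),
    mul_nonneg (by linarith : (0:ℝ) ≤ 1+y) (by linarith : (0:ℝ) ≤ 1+z),
    mul_nonneg (by linarith : (0:ℝ) ≤ 1+z) (by linarith : (0:ℝ) ≤ 1+x),
    mul_nonneg (by linarith : (0:ℝ) ≤ 1-x) (by linarith : (0:ℝ) ≤ 1-y),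
    mul_nonneg (by linarith : (0:ℝ) ≤ 1-y) (by linarith : (0:ℝ) ≤ 1-z),
    mul_nonneg (by linarith : (0:ℝ) ≤ 1-z) (by linarith : (0:ℝ) ≤ 1-x),
    mul_nonneg (mul_nonneg (by linarith : (0:ℝ) ≤ 1+x) (by linarith : (0:ℝ) ≤ 1-y)) (by linarith : (0:ℝ) ≤ 1-z),
    mul_nonneg (mul_nonneg (by linarith : (0:ℝ) ≤ 1-x) (by linarith : (0:ℝ) ≤ 1+y)) (by linarith : (0:ℝ) ≤ 1-z),
    mul_nonneg (mul_nonneg (by linarith : (0:ℝ) ≤ 1-x) (by linarith : (0:ℝ) ≤ 1-y)) (by linarith : (0:ℝ) ≤ 1+z),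
    mul_nonneg (mul_nonneg (by linarith : (0:ℝ) ≤ 1+x) (by linarith : (0:ℝ) ≤ 1+y)) (by linarith : (0:ℝ) ≤ 1+z)]


/-- The parameter `a(kx,ky,kz)` of the gadget second-moment matrix. -/
noncomputable def aKAK (kx ky kz : ℝ) : ℝ :=
  (1/9) * (6 + Real.cos (4*kx) * Real.cos (4*ky) + Real.cos (4*kx) * Real.cos (4*kz) +
    Real.cos (4*ky) * Real.cos (4*kz))

/-- The parameter `c(kx,ky,kz)` of the gadget second-moment matrix. -/
noncomputable def cKAK (kx ky kz : ℝ) : ℝ :=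
  (1/12) * (3 + Real.cos (4*kx) * Real.cos (4*ky) + Real.cos (4*ky) * Real.cos (4*kz) +
    Real.cos (4*kz) * Real.cos (4*kx)
    - 2 * (Real.cos (4*kx) + Real.cos (4*ky) + Real.cos (4*kz)))

/-- **Trace minimization over the Weyl chamber** (key step of Theorem thm:iSWAP1):
`3 + 6·Σcos(4k) + 5·Σ pairwise products ≥ −8` for all KAK coefficients, with equality
at the iSWAP coefficients `(π/4, π/4, 0)`; equivalently, the trace
`4a − 2c = 2 + (1/18)(3 + 6·Σcos + 5·Σpairwise)` of the gadget second-moment matrix is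
minimized at iSWAP, where it equals `14/9`. -/
theorem trace_minimized_at_iSWAP (kx ky kz : ℝ) :
    -8 ≤ 3 + 6 * (Real.cos (4*kx) + Real.cos (4*ky) + Real.cos (4*kz)) +
      5 * (Real.cos (4*kx) * Real.cos (4*ky) + Real.cos (4*ky) * Real.cos (4*kz) +
        Real.cos (4*kz) * Real.cos (4*kx)) ∧
    3 + 6 * (Real.cos (4*(Real.pi/4)) + Real.cos (4*(Real.pi/4)) + Real.cos (4*(0:ℝ))) +
      5 * (Real.cos (4*(Real.pi/4)) * Real.cos (4*(Real.pi/4)) +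
        Real.cos (4*(Real.pi/4)) * Real.cos (4*(0:ℝ)) +
        Real.cos (4*(0:ℝ)) * Real.cos (4*(Real.pi/4))) = -8 ∧
    14/9 ≤ 4 * aKAK kx ky kz - 2 * cKAK kx ky kz ∧
    4 * aKAK (Real.pi/4) (Real.pi/4) 0 - 2 * cKAK (Real.pi/4) (Real.pi/4) 0 = 14/9 := by
  have hpi : Real.cos (4*(Real.pi/4)) = -1 := by
    norm_num [show (4:ℝ)*(Real.pi/4) = Real.pi by ring, Real.cos_pi]
  have h0 : Real.cos (4*(0:ℝ)) = 1 := by norm_num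
  have key := cube_min (Real.neg_one_le_cos (4*kx)) (Real.cos_le_one (4*kx))
    (Real.neg_one_le_cos (4*ky)) (Real.cos_le_one (4*ky))
    (Real.neg_one_le_cos (4*kz)) (Real.cos_le_one (4*kz))
  refine ⟨by linarith, by rw [hpi, h0]; ring, ?_, ?_⟩
  · simp only [aKAK, cKAK]; linarith
  · simp only [aKAK, cKAK, hpi, h0]; ring
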